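/- arXiv:2407.03840 — 3 statements merged into one kernel-verified Lean document; each statement's English description precedes it below -/
import Mathlib

section
/- Let H be a real Hilbert space, Γ ⊆ H a subset, and (Λ_n)_{n∈ℕ} a nested sequence (Λ_n ⊆ Λ_{n+1}) of finite linearly independent subsets of Γ. Then ‖f − I_{Λ_n}(f)‖ → 0 as n → ∞ for every f in the closed linear span H_Γ of Γ if and only if P_{Λ_n}(g) → 0 as n → ∞ for every g ∈ Γ. -/
open Filter
open scoped RealInnerProductSpace ENNReal Topology

/-- Generalized interpolation operator: orthogonal projection onto the span of `Λ`. -/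
noncomputable def interp {H : Type*} [NormedAddCommGroup H] [InnerProductSpace ℝ H]
    (Λ : Finset H) (f : H) : H :=
  haveI : FiniteDimensional ℝ (Submodule.span ℝ (Λ : Set H)) :=
    FiniteDimensional.span_of_finite ℝ Λ.finite_toSet
  ((Submodule.span ℝ (Λ : Set H)).orthogonalProjectionOnto f : H)

/-- Generalized power function: distance from `g` to the span of `Λ`. -/
noncomputable def powerFn {H : Type*} [NormedAddCommGroup H] [InnerProductSpace ℝ H]
    (Λ : Finset H) (g : H) : ℝ := ‖g - interp Λ g‖

/-! The residual `f - I_Λ f` is the orthogonal projection of `f` onto `(span Λ)ᗮ`, so the residual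
maps form a family of linear maps of norm at most `1`. For an equicontinuous family of linear maps,
the vectors on which it tends to zero form a closed subspace; containing `Γ`, it contains the
closed linear span `H_Γ`. -/

section TendstoZero

variable {R E F ι : Type*} [Semiring R] [AddCommMonoid E] [Module R E] [TopologicalSpace E]
  [AddCommGroup F] [Module R F] [UniformSpace F] [IsUniformAddGroup F] [ContinuousConstSMul R F]

def LinearMap.tendstoZeroSubmodule (T : ι → E →ₗ[R] F) (l : Filter ι) : Submodule R E where
  carrier := {x | Tendsto (fun i ↦ T i x) l (𝓝 0)}
  zero_mem' := by simpa using tendsto_const_nhds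
  add_mem' hx hy := by simpa using hx.add hy
  smul_mem' c _ hx := by simpa using hx.const_smul c

theorem LinearMap.isClosed_tendstoZeroSubmodule (T : ι → E →ₗ[R] F) (l : Filter ι)
    (hT : Equicontinuous fun i ↦ ⇑(T i)) : IsClosed (tendstoZeroSubmodule T l : Set E) :=
  hT.isClosed_setOfPred_tendsto continuous_const

theorem tendsto_zero_of_mem_closure_span (T : ι → E →ₗ[R] F) {l : Filter ι} {Γ : Set E}
    (hT : Equicontinuous fun i ↦ ⇑(T i)) (hΓ : ∀ g ∈ Γ, Tendsto (fun i ↦ T i g) l (𝓝 0))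
    {f : E} (hf : f ∈ closure (Submodule.span R Γ : Set E)) :
    Tendsto (fun i ↦ T i f) l (𝓝 0) :=
  closure_minimal (Submodule.span_le (p := LinearMap.tendstoZeroSubmodule T l) |>.2 hΓ)
    (LinearMap.isClosed_tendstoZeroSubmodule T l hT) hf

end TendstoZero

theorem sub_interp_eq_starProjection {H : Type*} [NormedAddCommGroup H] [InnerProductSpace ℝ H]
    (Λ : Finset H) (f : H) :
    f - interp Λ f = (Submodule.span ℝ (Λ : Set H))ᗮ.starProjection f := by
  rw [Submodule.starProjection_orthogonal]
  rfl

theorem stmt_0_general {H : Type*} [NormedAddCommGroup H] [InnerProductSpace ℝ H]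
    (Γ : Set H) (Λ : ℕ → Finset H) :
    (∀ f ∈ closure (Submodule.span ℝ Γ : Set H),
        Tendsto (fun n => ‖f - interp (Λ n) f‖) atTop (𝓝 0)) ↔
      (∀ g ∈ Γ, Tendsto (fun n => powerFn (Λ n) g) atTop (𝓝 0)) := by
  simp_rw [powerFn, ← tendsto_zero_iff_norm_tendsto_zero, sub_interp_eq_starProjection]
  refine ⟨fun h g hg ↦ h g (subset_closure (Submodule.subset_span hg)), fun h f hf ↦ ?_⟩
  have hequi : Equicontinuous fun n ↦ ⇑(Submodule.span ℝ (Λ n : Set H))ᗮ.starProjection :=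
    (LipschitzWith.uniformEquicontinuous _ 1 fun n ↦
      Submodule.lipschitzWith_starProjection _).equicontinuous
  exact tendsto_zero_of_mem_closure_span
    (fun n ↦ ((Submodule.span ℝ (Λ n : Set H))ᗮ.starProjection : H →ₗ[ℝ] H)) hequi h hf

/-- convergence of generalized interpolation on the closed linear span of `Γ`
holds if and only if the power functions decay pointwise on `Γ`. -/
theorem stmt_0 {H : Type*} [NormedAddCommGroup H] [InnerProductSpace ℝ H] [CompleteSpace H]
    (Γ : Set H) (Λ : ℕ → Finset H)
    (hnested : ∀ n, Λ n ⊆ Λ (n + 1))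
    (hsub : ∀ n, (Λ n : Set H) ⊆ Γ)
    (hli : ∀ n, LinearIndependent (ι := (Λ n : Set H)) ℝ Subtype.val) :
    (∀ f ∈ closure (Submodule.span ℝ Γ : Set H),
        Tendsto (fun n => ‖f - interp (Λ n) f‖) atTop (𝓝 0)) ↔
      (∀ g ∈ Γ, Tendsto (fun n => powerFn (Λ n) g) atTop (𝓝 0)) :=
  stmt_0_general Γ Λ
end

section
/- Let H be a real Hilbert space, Γ ⊆ H, and (Λ_n)_{n∈ℕ} a nested sequence of finite linearly independent subsets of Γ such that the fill distances satisfy h_{Λ_n,Γ} → 0 as n → ∞. Then ‖f − I_{Λ_n}(f)‖ → 0 as n → ∞ for every f in the closed linear span H_Γ of Γ. -/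
/-!
As the fill distances tend to `0`, every point of `Γ`, hence every point of its closed span,
lies in the closure of the increasing union of the spans of the `Λ n`. Interpolation on `Λ n`
is orthogonal projection onto these nested subspaces, so it converges to the projection onto the
closure of their union, which fixes `f`.
-/

open Filter
open scoped RealInnerProductSpace ENNReal Topology

/-- Fill distance of `Λ` in `Γ`: the supremum over `g ∈ Γ` of the distance from `g` to `Λ`. -/
noncomputable def fillDist {M : Type*} [PseudoEMetricSpace M] (Λ Γ : Set M) : ℝ≥0∞ :=
  ⨆ g ∈ Γ, EMetric.infEdist g Λ

theorem infEDist_le_fillDist {M : Type*} [PseudoEMetricSpace M] {Λ Γ : Set M} {g : M}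
    (hg : g ∈ Γ) : Metric.infEDist g Λ ≤ fillDist Λ Γ :=
  le_iSup₂ (f := fun g _ => Metric.infEDist g Λ) g hg

theorem subset_closure_iUnion_of_tendsto_fillDist {M ι : Type*} [PseudoEMetricSpace M]
    {l : Filter ι} [l.NeBot] {Γ : Set M} {Λ : ι → Set M}
    (h : Tendsto (fun i => fillDist (Λ i) Γ) l (𝓝 0)) : Γ ⊆ closure (⋃ i, Λ i) := by
  intro g hg
  rw [Metric.mem_closure_iff_infEDist_zero, ← nonpos_iff_eq_zero]
  refine ge_of_tendsto h (Eventually.of_forall fun i => ?_)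
  exact (Metric.infEDist_anti (Set.subset_iUnion Λ i)).trans (infEDist_le_fillDist hg)

theorem closure_span_subset_of_tendsto_fillDist {𝕜 H ι : Type*} [NormedField 𝕜]
    [NormedAddCommGroup H] [NormedSpace 𝕜 H] {l : Filter ι} [l.NeBot] {Γ : Set H}
    {Λ : ι → Set H} (h : Tendsto (fun i => fillDist (Λ i) Γ) l (𝓝 0)) :
    closure (Submodule.span 𝕜 Γ : Set H) ⊆ (⨆ i, Submodule.span 𝕜 (Λ i)).topologicalClosure := by
  have hΛ : ⋃ i, Λ i ⊆ (⨆ i, Submodule.span 𝕜 (Λ i) : Submodule 𝕜 H) :=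
    Set.iUnion_subset fun i => Submodule.subset_span.trans <|
      SetLike.coe_subset_coe.mpr (le_iSup (fun i => Submodule.span 𝕜 (Λ i)) i)
  have hΓ : Γ ⊆ (⨆ i, Submodule.span 𝕜 (Λ i)).topologicalClosure :=
    (subset_closure_iUnion_of_tendsto_fillDist h).trans (closure_mono hΛ)
  exact closure_minimal (Submodule.span_le.mpr hΓ) (Submodule.isClosed_topologicalClosure _)

theorem interp_eq_starProjection {H : Type*} [NormedAddCommGroup H] [InnerProductSpace ℝ H]
    (Λ : Finset H) (f : H) :
    interp Λ f = (Submodule.span ℝ (Λ : Set H)).starProjection f := rfl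

theorem stmt_2_general {H : Type*} [NormedAddCommGroup H] [InnerProductSpace ℝ H] [CompleteSpace H]
    (Γ : Set H) (Λ : ℕ → Finset H)
    (hnested : ∀ n, Λ n ⊆ Λ (n + 1))
    (hfill : Tendsto (fun n => fillDist (Λ n : Set H) Γ) atTop (𝓝 0)) :
    ∀ f ∈ closure (Submodule.span ℝ Γ : Set H),
      Tendsto (fun n => ‖f - interp (Λ n) f‖) atTop (𝓝 0) := by
  intro f hf
  have hmono : Monotone fun n => Submodule.span ℝ (Λ n : Set H) :=
    monotone_nat_of_le_succ fun n => Submodule.span_mono (by exact_mod_cast hnested n)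
  have hfU := closure_span_subset_of_tendsto_fillDist hfill hf
  have hproj := Submodule.starProjection_tendsto_closure_iSup _ hmono f
  rw [Submodule.starProjection_eq_self_iff.mpr hfU] at hproj
  simpa only [interp_eq_starProjection, norm_sub_rev f] using
    tendsto_iff_norm_sub_tendsto_zero.mp hproj

/-- if the fill distances `h_{Λ n, Γ}` tend to `0`, then the generalized
interpolants converge to `f` for every `f` in the closed linear span of `Γ`. -/
theorem stmt_2 {H : Type*} [NormedAddCommGroup H] [InnerProductSpace ℝ H] [CompleteSpace H]
    (Γ : Set H) (Λ : ℕ → Finset H)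
    (hnested : ∀ n, Λ n ⊆ Λ (n + 1))
    (hsub : ∀ n, (Λ n : Set H) ⊆ Γ)
    (hli : ∀ n, LinearIndependent (ι := (Λ n : Set H)) ℝ Subtype.val)
    (hfill : Tendsto (fun n => fillDist (Λ n : Set H) Γ) atTop (𝓝 0)) :
    ∀ f ∈ closure (Submodule.span ℝ Γ : Set H),
      Tendsto (fun n => ‖f - interp (Λ n) f‖) atTop (𝓝 0) :=
  stmt_2_general Γ Λ hnested hfill
end

section
/- Let H be a real Hilbert space, Γ ⊆ H, (Λ_n)_{n∈ℕ} a nested sequence of finite linearly independent subsets of Γ, and f an element of the closed linear span H_Γ of Γ. If ⟪I_{Λ_n}(f), γ⟫ → ⟪f, γ⟫ as n → ∞ for every γ ∈ Γ, then ‖f − I_{Λ_n}(f)‖ → 0 as n → ∞. -/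
open Filter
open scoped RealInnerProductSpace ENNReal Topology

/-!
The residuals `rₙ = f - I_{Λₙ}(f)` are orthogonal projections of `f` onto `span(Λₙ)ᗮ`, so they are
bounded by `‖f‖` and satisfy `‖rₙ‖² = ⟪rₙ, f⟫`. Weak convergence means `⟪rₙ, γ⟫ → 0` for
`γ ∈ Γ`; this passes to the span by linearity and to its closure because the functionals `⟪rₙ, ·⟫` are
uniformly Lipschitz. Taking the test vector `f` itself gives `‖rₙ‖² → 0`.
-/

section

variable {E : Type*} [NormedAddCommGroup E] [InnerProductSpace ℝ E]

namespace Submodule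

variable (K : Submodule ℝ E) [K.HasOrthogonalProjection]

theorem norm_sub_starProjection_le (v : E) : ‖v - K.starProjection v‖ ≤ ‖v‖ := by
  rw [← starProjection_orthogonal_val]
  exact Kᗮ.norm_starProjection_apply_le v

theorem inner_sub_starProjection_self (v : E) :
    ⟪v - K.starProjection v, v⟫ = ‖v - K.starProjection v‖ ^ 2 := by
  rw [← starProjection_orthogonal_val]
  simpa using Kᗮ.re_inner_starProjection_eq_normSq v

end Submodule

theorem tendsto_inner_zero_of_mem_closure_span {ι : Type*} {l : Filter ι} {x : ι → E}
    {C : NNReal} (hx : ∀ i, ‖x i‖ ≤ C) {Γ : Set E}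
    (hΓ : ∀ γ ∈ Γ, Tendsto (fun i => ⟪x i, γ⟫) l (𝓝 0)) {g : E}
    (hg : g ∈ closure (Submodule.span ℝ Γ : Set E)) :
    Tendsto (fun i => ⟪x i, g⟫) l (𝓝 0) := by
  have hequi : Equicontinuous fun i (g : E) => ⟪x i, g⟫ :=
    (LipschitzWith.uniformEquicontinuous _ C fun i =>
      (innerSL ℝ (x i)).lipschitzWith_of_opNorm_le (by simpa using hx i)).equicontinuous
  have hclosed : IsClosed {g : E | Tendsto (fun i => ⟪x i, g⟫) l (𝓝 0)} :=
    hequi.isClosed_setOfPred_tendsto continuous_const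
  refine closure_minimal (fun g hg => ?_) hclosed hg
  induction hg using Submodule.span_induction with
  | mem γ hγ => exact hΓ γ hγ
  | zero => simpa using tendsto_const_nhds
  | add a b _ _ ha hb => simpa [inner_add_right] using ha.add hb
  | smul c a _ ha => simpa [inner_smul_right] using ha.const_mul c

theorem tendsto_norm_sub_starProjection_of_tendsto_inner {ι : Type*} {l : Filter ι}
    (K : ι → Submodule ℝ E) [∀ i, (K i).HasOrthogonalProjection] {Γ : Set E} {f : E}
    (hf : f ∈ closure (Submodule.span ℝ Γ : Set E))
    (hweak : ∀ γ ∈ Γ, Tendsto (fun i => ⟪(K i).starProjection f, γ⟫) l (𝓝 ⟪f, γ⟫)) :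
    Tendsto (fun i => ‖f - (K i).starProjection f‖) l (𝓝 0) := by
  have hnull : ∀ γ ∈ Γ, Tendsto (fun i => ⟪f - (K i).starProjection f, γ⟫) l (𝓝 0) := by
    intro γ hγ
    simpa [inner_sub_left] using (hweak γ hγ).const_sub ⟪f, γ⟫
  have hsq : Tendsto (fun i => ‖f - (K i).starProjection f‖ ^ 2) l (𝓝 0) := by
    simpa only [Submodule.inner_sub_starProjection_self] using
      tendsto_inner_zero_of_mem_closure_span (C := ‖f‖₊)
        (fun i => (K i).norm_sub_starProjection_le f) hnull hf
  simpa [Real.sqrt_sq (norm_nonneg _)] using hsq.sqrt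

end

theorem stmt_10_general {H : Type*} [NormedAddCommGroup H] [InnerProductSpace ℝ H]
    (Γ : Set H) (Λ : ℕ → Finset H)
    (f : H) (hf : f ∈ closure (Submodule.span ℝ Γ : Set H))
    (hweak : ∀ γ ∈ Γ, Tendsto (fun n => ⟪interp (Λ n) f, γ⟫) atTop (𝓝 ⟪f, γ⟫)) :
    Tendsto (fun n => ‖f - interp (Λ n) f‖) atTop (𝓝 0) := by
  simp only [interp_eq_starProjection] at hweak ⊢
  exact tendsto_norm_sub_starProjection_of_tendsto_inner _ hf hweak

/-- if `f` lies in the closed linear span of `Γ` and the interpolants converge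
weakly on `Γ`, i.e. `⟪I_{Λ n}(f), γ⟫ → ⟪f, γ⟫` for all `γ ∈ Γ`, then they converge in norm:
`‖f - I_{Λ n}(f)‖ → 0`. -/
theorem stmt_10 {H : Type*} [NormedAddCommGroup H] [InnerProductSpace ℝ H] [CompleteSpace H]
    (Γ : Set H) (Λ : ℕ → Finset H)
    (hnested : ∀ n, Λ n ⊆ Λ (n + 1))
    (hsub : ∀ n, (Λ n : Set H) ⊆ Γ)
    (hli : ∀ n, LinearIndependent (ι := (Λ n : Set H)) ℝ Subtype.val)
    (f : H) (hf : f ∈ closure (Submodule.span ℝ Γ : Set H))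
    (hweak : ∀ γ ∈ Γ, Tendsto (fun n => ⟪interp (Λ n) f, γ⟫) atTop (𝓝 ⟪f, γ⟫)) :
    Tendsto (fun n => ‖f - interp (Λ n) f‖) atTop (𝓝 0) :=
  stmt_10_general Γ Λ f hf hweak
end
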